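/- arXiv:1906.02016 — 6 statements merged into one kernel-verified Lean document; each statement's English description precedes it below -/
import Mathlib

section
/- For every g ≥ 2, the permutation of {1,...,4g-4} obtained by removing the 0s from the permutation representative (top row 0,1,...,4g-4; bottom row 4g-4, 4g-6, 4g-5, 4g-8, 4g-7, ..., 2g, 2g+1, 2g-1, 2g-3, 2g-2, ..., 3, 4, 1, 2, 0) is a single cycle of length 4g-4, namely (1, 4g-4, 2, 4g-6, 4, ..., 2g, 2g-2, 2g-1, 2g-3, 2g+1, 2g-5, 2g+3, ..., 4g-7, 3, 4g-5). -/
/-- The bottom row of the permutation representative (equation (4.1)) of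
`H^hyp(2g-2)`: top row `0,1,…,4g-4`, bottom row
`4g-4, 4g-6, 4g-5, 4g-8, 4g-7, …, 2g, 2g+1, 2g-1, 2g-3, 2g-2, …, 3, 4, 1, 2, 0`. -/
def hypBottomA (g j : ℕ) : ℕ :=
  if j = 0 then 4 * g - 4
  else if j ≤ 2 * g - 4 then (if j % 2 = 1 then 4 * g - 5 - j else 4 * g - 3 - j)
  else if j = 2 * g - 3 then 2 * g - 1
  else if j ≤ 4 * g - 5 then
    (if (4 * g - 5 - j) % 2 = 0 then (4 * g - 5 - j) + 2 else 4 * g - 5 - j)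
  else 0

/-- The `i`-th element of the cycle (starting at 0), in shifted labels. -/
def cFun (g i : ℕ) : ℕ :=
  if i = 0 then 0
  else if i % 2 = 0 then (if i ≤ 2 * g - 2 then i - 1 else 4 * g - 4 - i)
  else (if 2 * g - 1 ≤ i then i - 1 else 4 * g - 4 - i)

/-- Inverse of `cFun`. -/
def dFun (g v : ℕ) : ℕ :=
  if v = 0 then 0
  else if v % 2 = 1 then (if v ≤ 2 * g - 3 then v + 1 else 4 * g - 4 - v)
  else (if 2 * g - 2 ≤ v then v + 1 else 4 * g - 4 - v)

lemma cFun_lt (g i : ℕ) (hg : 2 ≤ g) (hi : i < 4 * g - 4) : cFun g i < 4 * g - 4 := by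
  unfold cFun; split_ifs <;> omega

lemma dFun_lt (g v : ℕ) (hg : 2 ≤ g) (hv : v < 4 * g - 4) : dFun g v < 4 * g - 4 := by
  unfold dFun; split_ifs <;> omega

lemma dFun_cFun (g i : ℕ) (hg : 2 ≤ g) (hi : i < 4 * g - 4) : dFun g (cFun g i) = i := by
  unfold cFun dFun; split_ifs <;> first | exact absurd ‹False› not_false | omega

lemma cFun_dFun (g v : ℕ) (hg : 2 ≤ g) (hv : v < 4 * g - 4) : cFun g (dFun g v) = v := by
  unfold cFun dFun; split_ifs <;> first | exact absurd ‹False› not_false | omega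

set_option maxHeartbeats 1000000 in
lemma key (g i : ℕ) (hg : 2 ≤ g) (hi : i + 1 < 4 * g - 4) :
    hypBottomA g (cFun g i) - 1 = cFun g (i + 1) := by
  unfold cFun
  split_ifs <;> first | exact absurd ‹False› not_false |
    (unfold hypBottomA; split_ifs <;> first | exact absurd ‹False› not_false | omega)

lemma key_wrap (g : ℕ) (hg : 2 ≤ g) :
    hypBottomA g (cFun g (4 * g - 5)) - 1 = 0 := by
  unfold cFun hypBottomA
  split_ifs <;> first | exact absurd ‹False› not_false | omega

theorem aux (g : ℕ) (hg : 2 ≤ g) (n : ℕ) (hn : 4 * g - 4 = n + 2) :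
    ∃ σ : Equiv.Perm (Fin (n + 2)),
      (∀ x : Fin (n + 2), (σ x : ℕ) = hypBottomA g (x : ℕ) - 1) ∧
      σ.IsCycle ∧ σ.support = Finset.univ := by
  have hlt : ∀ i : Fin (n + 2), (i : ℕ) < 4 * g - 4 := fun i => by
    have := i.isLt; omega
  let e : Equiv.Perm (Fin (n + 2)) :=
    { toFun := fun i => ⟨cFun g i, by have := cFun_lt g i hg (hlt i); omega⟩
      invFun := fun v => ⟨dFun g v, by have := dFun_lt g v hg (hlt v); omega⟩
      left_inv := fun i => by
        apply Fin.ext; exact dFun_cFun g i hg (hlt i)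
      right_inv := fun v => by
        apply Fin.ext; exact cFun_dFun g v hg (hlt v) }
  refine ⟨e * finRotate (n + 2) * e⁻¹, ?_, isCycle_finRotate.conj, ?_⟩
  · intro x
    have hx : x = e (e⁻¹ x) := (Equiv.apply_symm_apply e x).symm
    set i := e⁻¹ x with hidef
    have hval : (x : ℕ) = cFun g (i : ℕ) := by rw [hx]; rfl
    have happ : ((e * finRotate (n + 2) * e⁻¹) x : ℕ)
        = cFun g ((finRotate (n + 2) i : Fin (n + 2)) : ℕ) := rfl
    have hrot : ((finRotate (n + 2) i : Fin (n + 2)) : ℕ) = ((i : ℕ) + 1) % (n + 2) := by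
      rw [finRotate_succ_apply]
      simp [Fin.add_def]
    rw [happ, hrot, hval]
    by_cases hi : (i : ℕ) = n + 1
    · rw [hi]
      have h1 : (n + 1 + 1) % (n + 2) = 0 := by
        rw [show n + 1 + 1 = n + 2 from rfl, Nat.mod_self]
      rw [h1]
      have := key_wrap g hg
      rw [show 4 * g - 5 = n + 1 by omega] at this
      rw [this]; rfl
    · have hlt2 : (i : ℕ) + 1 < n + 2 := by have := i.isLt; omega
      rw [Nat.mod_eq_of_lt hlt2]
      exact (key g i hg (by omega)).symm
  · rw [Equiv.Perm.support_conj, support_finRotate, Finset.univ_map_equiv_to_embedding]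

/-- For every `g ≥ 2`, removing the `0`s from the representative (4.1) yields a
permutation of `{1, …, 4g-4}` (label `i` maps to the bottom entry of column `i-1`;
on `Fin (4g-4)`, labels are shifted down by one) which is a single cycle of length
`4g-4`. -/
theorem stmt_2 (g : ℕ) (hg : 2 ≤ g) :
    ∃ σ : Equiv.Perm (Fin (4 * g - 4)),
      (∀ x : Fin (4 * g - 4), (σ x : ℕ) = hypBottomA g (x : ℕ) - 1) ∧
      σ.IsCycle ∧ σ.support = Finset.univ := by
  obtain ⟨n, hn⟩ : ∃ n, 4 * g - 4 = n + 2 := ⟨4 * g - 6, by omega⟩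
  rw [hn]
  exact aux g hg n hn
end

section
/- For every g ≥ 2, the permutation of {1,...,4g-2} obtained by removing the 0s from the permutation representative with top row 0,1,...,4g-2 and bottom row 4g-2, 4g-4, 4g-3, 4g-6, 4g-5, ..., 2g, 2g+1, 2g-1, 2g-3, 2g-2, ..., 3, 4, 1, 2, 0 is a single cycle of length 4g-2. -/
/-- The bottom row of the permutation representative of `H^hyp(g-1,g-1)`:
top row `0,1,…,4g-2`, bottom row
`4g-2, 4g-4, 4g-3, 4g-6, 4g-5, …, 2g, 2g+1, 2g-1, 2g-3, 2g-2, …, 3, 4, 1, 2, 0`. -/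
def hypBottomB (g j : ℕ) : ℕ :=
  if j = 0 then 4 * g - 2
  else if j ≤ 2 * g - 2 then (if j % 2 = 1 then 4 * g - 3 - j else 4 * g - 1 - j)
  else if j = 2 * g - 1 then 2 * g - 1
  else if j ≤ 4 * g - 3 then
    (if (4 * g - 3 - j) % 2 = 0 then (4 * g - 3 - j) + 2 else 4 * g - 3 - j)
  else 0

/-- Parametrization of the single orbit: `kf g i` is the `i`-th element. -/
def kf (g i : ℕ) : ℕ :=
  if i = 0 then 0
  else if i ≤ 2 * g - 1 then (if i % 2 = 1 then 4 * g - 2 - i else i - 1)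
  else (if i % 2 = 0 then 4 * g - 2 - i else i - 1)

theorem kf_lt (g : ℕ) (hg : 2 ≤ g) {i : ℕ} (hi : i < 4 * g - 2) :
    kf g i < 4 * g - 2 := by
  simp only [kf]; split_ifs <;> first | contradiction | omega

theorem kf_inj (g : ℕ) (hg : 2 ≤ g) {i j : ℕ} (hi : i < 4 * g - 2)
    (hj : j < 4 * g - 2) (h : kf g i = kf g j) : i = j := by
  simp only [kf] at h; split_ifs at h <;> omega

set_option maxHeartbeats 1600000 in
theorem kf_step (g : ℕ) (hg : 2 ≤ g) {i : ℕ} (hi : i < 4 * g - 2) :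
    kf g ((i + 1) % (4 * g - 2)) = hypBottomB g (kf g i) - 1 := by
  have H : (i = 0 ∧ kf g i = 0)
      ∨ (1 ≤ i ∧ i ≤ 2 * g - 1 ∧ i % 2 = 1 ∧ kf g i = 4 * g - 2 - i)
      ∨ (2 ≤ i ∧ i ≤ 2 * g - 1 ∧ i % 2 = 0 ∧ kf g i = i - 1)
      ∨ (2 * g ≤ i ∧ i % 2 = 0 ∧ kf g i = 4 * g - 2 - i)
      ∨ (2 * g ≤ i ∧ i % 2 = 1 ∧ kf g i = i - 1) := by
    simp only [kf]; split_ifs <;> first | contradiction | omega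
  rcases eq_or_ne i (4 * g - 3) with h | h
  · have hm : (i + 1) % (4 * g - 2) = 0 := by
      rw [show i + 1 = 4 * g - 2 by omega, Nat.mod_self]
    rw [hm]
    rcases H with ⟨h1, h2⟩ | ⟨h1, h2, h3, h4⟩ | ⟨h1, h2, h3, h4⟩ | ⟨h1, h2, h3⟩ | ⟨h1, h2, h3⟩ <;>
      [rw [h2]; rw [h4]; rw [h4]; rw [h3]; rw [h3]] <;>
      simp only [kf, hypBottomB] <;> split_ifs <;> first | contradiction | omega
  · have hm : (i + 1) % (4 * g - 2) = i + 1 := Nat.mod_eq_of_lt (by omega)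
    rw [hm]
    rcases H with ⟨h1, h2⟩ | ⟨h1, h2, h3, h4⟩ | ⟨h1, h2, h3, h4⟩ | ⟨h1, h2, h3⟩ | ⟨h1, h2, h3⟩ <;>
      [rw [h2]; rw [h4]; rw [h4]; rw [h3]; rw [h3]] <;>
      simp only [kf, hypBottomB] <;> split_ifs <;> first | contradiction | omega

theorem finRotate_apply_eq {n : ℕ} [NeZero n] (j : Fin n) :
    finRotate n j = j + 1 := by
  cases n with
  | zero => exact j.elim0
  | succ m => exact finRotate_succ_apply j



/-- For every `g ≥ 2`, removing the `0`s from the representative of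
`H^hyp(g-1,g-1)` yields a permutation of `{1, …, 4g-2}` (label `i` maps to the
bottom entry of column `i-1`; on `Fin (4g-2)`, labels are shifted down by one)
which is a single cycle of length `4g-2`. -/
theorem stmt_3 (g : ℕ) (hg : 2 ≤ g) :
    ∃ σ : Equiv.Perm (Fin (4 * g - 2)),
      (∀ x : Fin (4 * g - 2), (σ x : ℕ) = hypBottomB g (x : ℕ) - 1) ∧
      σ.IsCycle ∧ σ.support = Finset.univ := by
  have hN : 2 ≤ 4 * g - 2 := by omega
  haveI : NeZero (4 * g - 2) := ⟨by omega⟩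
  let f : Fin (4 * g - 2) → Fin (4 * g - 2) := fun x => ⟨kf g x, kf_lt g hg x.isLt⟩
  have hfinj : Function.Injective f := fun a b hab =>
    Fin.ext (kf_inj g hg a.isLt b.isLt (congrArg Fin.val hab))
  let e : Equiv.Perm (Fin (4 * g - 2)) :=
    Equiv.ofBijective f (Finite.injective_iff_bijective.mp hfinj)
  have he : ∀ x, ((e x : Fin (4 * g - 2)) : ℕ) = kf g x := fun x => rfl
  refine ⟨e * finRotate (4 * g - 2) * e⁻¹, ?_, (isCycle_finRotate_of_le hN).conj, ?_⟩
  · intro x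
    set j : Fin (4 * g - 2) := e⁻¹ x with hj
    have hxj : x = e j := (Equiv.apply_symm_apply e x).symm
    have hrot : finRotate (4 * g - 2) j = j + 1 := finRotate_apply_eq j
    have hval : ((j + 1 : Fin (4 * g - 2)) : ℕ) = ((j : ℕ) + 1) % (4 * g - 2) := by
      rw [Fin.add_def, Fin.val_one', Nat.mod_eq_of_lt (show 1 < 4 * g - 2 by omega)]
    have : ((e * finRotate (4 * g - 2) * e⁻¹) x : ℕ) = kf g (((j : ℕ) + 1) % (4 * g - 2)) := by
      simp only [Equiv.Perm.mul_apply, ← hj, hrot]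
      rw [he, hval]
    rw [this, kf_step g hg j.isLt, hxj, he]
  · rw [Equiv.Perm.support_conj, support_finRotate_of_le hN]
    exact Finset.map_univ_equiv _
end

section
/- Let (h₁,v₁) and (h₂,v₂) be pairs of permutations on disjoint finite sets A and B, with h₁ = (a₁,a₂,...,a_N) a single N-cycle on A, h₂ = (b₁,b₂,...,b_M) a single M-cycle on B, v₁ a single cycle on A with v₁⁻¹(a₁) = a₂, and v₂ a single cycle on B with v₂⁻¹(b₁) = b₂. Define h = (a₁,b₁)·h₁·h₂ and v = v₁·v₂·(a₁,b₁), where (a₁,b₁) denotes the transposition. Then h is a single (N+M)-cycle on A ∪ B, v is a single (N+M)-cycle on A ∪ B, and the commutator [h,v] equals the conjugate of [h₁,v₁]·[h₂,v₂] by the transposition (a₁,b₁). -/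
/-!
Away from the two points `h₁⁻¹ a₁` and `h₂⁻¹ b₁`, the product `(a₁ b₁) h₁ h₂` acts as `h₁` on `A`
and as `h₂` on `B`, while the transposition sends those two points across, to `b₁` and `a₁`.
So the orbit of a point runs through all of the `h₁`-cycle and then all of the `h₂`-cycle:
`h` is one cycle on `A ∪ B`. The same holds for `v`, since `v⁻¹ = (b₁ a₁) v₂⁻¹ v₁⁻¹`.

Since permutations supported on `A` commute with those supported on `B`,
`[h₁ h₂, v₁ v₂] = [h₁, v₁] [h₂, v₂]`. Moving the transposition `s` out of `[s h₁ h₂, v₁ v₂ s]` only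
requires `s` to commute with `v₁ v₂ h₁ h₂`. The normalization makes `v₁ v₂ h₁ h₂` fix `a₁` and `b₁`,
so it does.
-/

open Equiv Equiv.Perm
open scoped commutatorElement

section Commutator

variable {G : Type*} [Group G]

theorem commutatorElement_mul_mul_of_commute {x₁ y₁ x₂ y₂ : G}
    (hxx : Commute x₁ x₂) (hxy : Commute x₁ y₂) (hyx : Commute y₁ x₂) (hyy : Commute y₁ y₂) :
    ⁅x₁ * x₂, y₁ * y₂⁆ = ⁅x₁, y₁⁆ * ⁅x₂, y₂⁆ := by
  simp only [commutatorElement_def, mul_inv_rev, mul_assoc]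
  rw [hyx.symm.left_comm, hxx.inv_inv.symm.left_comm, hxy.symm.inv_right.left_comm,
    hxx.symm.inv_right.left_comm, hyy.inv_inv.symm.eq, hyx.inv_inv.symm.left_comm,
    hyy.symm.inv_right.left_comm, hyx.symm.inv_right.left_comm]

theorem commutatorElement_mul_mul_of_sq_eq_one {s p q : G} (hs : s * s = 1)
    (hc : Commute s (q * p)) : ⁅s * p, q * s⁆ = s * ⁅p, q⁆ * s⁻¹ := by
  have hs' : s⁻¹ = s := inv_eq_of_mul_eq_one_right hs
  have hc' : s * (p⁻¹ * q⁻¹) = p⁻¹ * q⁻¹ * s := by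
    rw [← mul_inv_rev]; exact hc.inv_right.eq
  simp only [commutatorElement_def, mul_inv_rev, hs', mul_assoc]
  rw [← mul_assoc s s, hs, one_mul, hc', mul_assoc]

end Commutator

namespace Equiv.Perm

variable {α : Type*} [DecidableEq α]

theorem commute_swap_of_apply_eq {σ : Perm α} {a b : α} (ha : σ a = a) (hb : σ b = b) :
    Commute (swap a b) σ :=
  (mul_inv_eq_iff_eq_mul.1 (by rw [← swap_apply_apply, ha, hb])).symm

theorem mul_mul_swap_eq_inv (f g : Perm α) (a b : α) :
    f * g * swap a b = (swap b a * g⁻¹ * f⁻¹)⁻¹ := by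
  rw [mul_inv_rev, mul_inv_rev, inv_inv, inv_inv, swap_inv, swap_comm, mul_assoc]

variable [Fintype α]

theorem inv_apply_mem_support_of_mem {f : Perm α} {a : α} (ha : a ∈ f.support) :
    f⁻¹ a ∈ f.support := by
  rw [← support_inv]; exact apply_mem_support.2 (by rwa [support_inv])

theorem IsCycle.sameCycle_of_eqOn_support {f σ : Perm α} (hf : f.IsCycle) {c : α}
    (hc : c ∈ f.support) (hσ : ∀ x ∈ f.support, x ≠ c → σ x = f x) {x : α}
    (hx : x ∈ f.support) : σ.SameCycle x c := by
  obtain ⟨n, -, hn⟩ := (hf.sameCycle (mem_support.1 hx) (mem_support.1 hc)).exists_pow_eq'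
  induction n generalizing x with
  | zero => exact hn ▸ SameCycle.refl _ _
  | succ n ih =>
    by_cases hxc : x = c
    · exact hxc ▸ SameCycle.refl _ _
    · rw [← sameCycle_apply_left, hσ x hx hxc]
      exact ih (apply_mem_support.2 hx) (by rwa [← mul_apply, ← pow_succ])

section Join

variable {f g : Perm α} {a b : α}

theorem sameCycle_swap_mul_mul (hf : f.IsCycle) (hg : g.IsCycle) (hd : f.Disjoint g)
    (ha : a ∈ f.support) (hb : b ∈ g.support) {x : α} (hx : x ∈ f.support ∪ g.support) :
    (swap a b * f * g).SameCycle x (f⁻¹ a) := by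
  have hbf : b ∉ f.support := fun h => hd.mem_imp h hb
  have hσf : ∀ y ∈ f.support, y ≠ f⁻¹ a → (swap a b * f * g) y = f y := by
    intro y hy hya
    rw [mul_apply, mul_apply, notMem_support.1 (hd.mem_imp hy)]
    exact swap_apply_of_ne_of_ne (fun h => hya ((inv_eq_iff_eq.2 h.symm).symm))
      fun h => hbf (h ▸ apply_mem_support.2 hy)
  have hσg : ∀ y ∈ g.support, y ≠ g⁻¹ b → (swap a b * f * g) y = g y := by
    intro y hy hyb
    have hgy : g y ∈ g.support := apply_mem_support.2 hy
    rw [mul_apply, mul_apply, notMem_support.1 (hd.symm.mem_imp hgy)]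
    exact swap_apply_of_ne_of_ne (fun h => hd.mem_imp ha (h ▸ hgy))
      fun h => hyb ((inv_eq_iff_eq.2 h.symm).symm)
  have hσgb : (swap a b * f * g) (g⁻¹ b) = a := by
    rw [mul_apply, mul_apply, ← mul_apply g, mul_inv_cancel, one_apply, notMem_support.1 hbf,
      swap_apply_right]
  rcases Finset.mem_union.1 hx with hx | hx
  · exact hf.sameCycle_of_eqOn_support (inv_apply_mem_support_of_mem ha) hσf hx
  · -- the `g`-orbit is entered from `g⁻¹ b`, which the swap sends into the `f`-orbit at `a`
    exact (hg.sameCycle_of_eqOn_support (inv_apply_mem_support_of_mem hb) hσg hx).trans <|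
      (show SameCycle _ (g⁻¹ b) a from ⟨1, by rw [zpow_one, hσgb]⟩).trans <|
        hf.sameCycle_of_eqOn_support (inv_apply_mem_support_of_mem ha) hσf ha

theorem swap_mul_mul_apply_inv_apply (hd : f.Disjoint g) (ha : a ∈ f.support) :
    (swap a b * f * g) (f⁻¹ a) = b := by
  rw [mul_apply, mul_apply, notMem_support.1 (hd.mem_imp (inv_apply_mem_support_of_mem ha)),
    ← mul_apply f, mul_inv_cancel, one_apply, swap_apply_left]

theorem support_swap_mul_mul (hf : f.IsCycle) (hg : g.IsCycle) (hd : f.Disjoint g)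
    (ha : a ∈ f.support) (hb : b ∈ g.support) :
    (swap a b * f * g).support = f.support ∪ g.support := by
  refine Finset.Subset.antisymm (fun x hx => ?_) fun x hx => ?_
  · by_contra hx'
    rw [Finset.mem_union, not_or] at hx'
    refine mem_support.1 hx ?_
    rw [mul_apply, mul_apply, notMem_support.1 hx'.2, notMem_support.1 hx'.1]
    exact swap_apply_of_ne_of_ne (fun h => hx'.1 (h ▸ ha)) fun h => hx'.2 (h ▸ hb)
  · refine (sameCycle_swap_mul_mul hf hg hd ha hb hx).mem_support_iff.2 (mem_support.2 ?_)
    rw [swap_mul_mul_apply_inv_apply hd ha]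
    exact fun h => hd.symm.mem_imp hb (h ▸ inv_apply_mem_support_of_mem ha)

theorem IsCycle.swap_mul_mul (hf : f.IsCycle) (hg : g.IsCycle) (hd : f.Disjoint g)
    (ha : a ∈ f.support) (hb : b ∈ g.support) : (swap a b * f * g).IsCycle := by
  refine ⟨f⁻¹ a, ?_, fun y hy => (sameCycle_swap_mul_mul hf hg hd ha hb ?_).symm⟩
  · rw [swap_mul_mul_apply_inv_apply hd ha]
    exact fun h => hd.symm.mem_imp hb (h ▸ inv_apply_mem_support_of_mem ha)
  · rw [← support_swap_mul_mul hf hg hd ha hb]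
    exact mem_support.2 hy

theorem support_mul_mul_swap (hf : f.IsCycle) (hg : g.IsCycle) (hd : f.Disjoint g)
    (ha : a ∈ f.support) (hb : b ∈ g.support) :
    (f * g * swap a b).support = f.support ∪ g.support := by
  rw [mul_mul_swap_eq_inv, support_inv,
    support_swap_mul_mul hg.inv hf.inv hd.symm.inv_left.inv_right (by rwa [support_inv])
      (by rwa [support_inv]), support_inv, support_inv, Finset.union_comm]

theorem IsCycle.mul_mul_swap (hf : f.IsCycle) (hg : g.IsCycle) (hd : f.Disjoint g)
    (ha : a ∈ f.support) (hb : b ∈ g.support) : (f * g * swap a b).IsCycle := by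
  rw [mul_mul_swap_eq_inv]
  exact (hg.inv.swap_mul_mul hf.inv hd.symm.inv_left.inv_right (by rwa [support_inv])
    (by rwa [support_inv])).inv

end Join

end Equiv.Perm

theorem stmt_4_general {α : Type*} [Fintype α] [DecidableEq α]
    (h₁ v₁ h₂ v₂ : Equiv.Perm α) (A B : Finset α) (a₁ a₂ b₁ b₂ : α)
    (hAB : Disjoint A B)
    (hh₁ : h₁.IsCycle) (hh₁s : h₁.support = A)
    (hv₁ : v₁.IsCycle) (hv₁s : v₁.support = A)
    (hh₂ : h₂.IsCycle) (hh₂s : h₂.support = B)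
    (hv₂ : v₂.IsCycle) (hv₂s : v₂.support = B)
    (ha₁ : a₁ ∈ A) (hb₁ : b₁ ∈ B)
    (ha12 : h₁ a₁ = a₂) (hb12 : h₂ b₁ = b₂)
    (hv₁n : v₁⁻¹ a₁ = a₂) (hv₂n : v₂⁻¹ b₁ = b₂) :
    ∀ h v : Equiv.Perm α,
      h = Equiv.swap a₁ b₁ * h₁ * h₂ →
      v = v₁ * v₂ * Equiv.swap a₁ b₁ →
      h.IsCycle ∧ h.support = A ∪ B ∧ v.IsCycle ∧ v.support = A ∪ B ∧
        h * v * h⁻¹ * v⁻¹ =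
          Equiv.swap a₁ b₁ * ((h₁ * v₁ * h₁⁻¹ * v₁⁻¹) * (h₂ * v₂ * h₂⁻¹ * v₂⁻¹)) *
            (Equiv.swap a₁ b₁)⁻¹ := by
  intro h v rfl rfl
  have hA : a₁ ∈ h₁.support := hh₁s ▸ ha₁
  have hB : b₁ ∈ h₂.support := hh₂s ▸ hb₁
  have hd : ∀ {σ τ : Perm α}, σ.support = A → τ.support = B → σ.Disjoint τ :=
    fun hσ hτ => disjoint_iff_disjoint_support.2 (hσ ▸ hτ ▸ hAB)
  have fixA : ∀ {σ : Perm α}, σ.support = B → ∀ {x}, x ∈ A → σ x = x :=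
    fun hσ _ hx => notMem_support.1 (hσ ▸ Finset.disjoint_left.1 hAB hx)
  have fixB : ∀ {σ : Perm α}, σ.support = A → ∀ {x}, x ∈ B → σ x = x :=
    fun hσ _ hx => notMem_support.1 (hσ ▸ Finset.disjoint_right.1 hAB hx)
  have ha₂ : a₂ ∈ A := hh₁s ▸ ha12 ▸ apply_mem_support.2 hA
  have hb₂ : b₂ ∈ B := hh₂s ▸ hb12 ▸ apply_mem_support.2 hB
  have hswap : Commute (swap a₁ b₁) (v₁ * v₂ * (h₁ * h₂)) := by
    refine commute_swap_of_apply_eq ?_ ?_ <;> simp only [mul_apply]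
    · rw [fixA hh₂s ha₁, ha12, fixA hv₂s ha₂, ← inv_eq_iff_eq.1 hv₁n]
    · rw [hb12, fixB hh₁s hb₂, ← inv_eq_iff_eq.1 hv₂n, fixB hv₁s hb₁]
  refine ⟨hh₁.swap_mul_mul hh₂ (hd hh₁s hh₂s) hA hB, ?_, hv₁.mul_mul_swap hv₂ (hd hv₁s hv₂s)
    (hv₁s ▸ ha₁) (hv₂s ▸ hb₁), ?_, ?_⟩
  · rw [support_swap_mul_mul hh₁ hh₂ (hd hh₁s hh₂s) hA hB, hh₁s, hh₂s]
  · rw [support_mul_mul_swap hv₁ hv₂ (hd hv₁s hv₂s) (hv₁s ▸ ha₁) (hv₂s ▸ hb₁), hv₁s, hv₂s]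
  · rw [← commutatorElement_def, mul_assoc (swap a₁ b₁),
      commutatorElement_mul_mul_of_sq_eq_one (swap_mul_self a₁ b₁) hswap,
      commutatorElement_mul_mul_of_commute (hd hh₁s hh₂s).commute (hd hh₁s hv₂s).commute
        (hd hv₁s hh₂s).commute (hd hv₁s hv₂s).commute]
    rfl

/-- Algebraic form of the cylinder concatenation lemma (Lemma 3.1): if `(h₁,v₁)`
and `(h₂,v₂)` are pairs of single cycles with disjoint supports `A` and `B`,
normalized so that `h₁ a₁ = a₂`, `v₁⁻¹ a₁ = a₂`, `h₂ b₁ = b₂`, `v₂⁻¹ b₁ = b₂`,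
then `h = (a₁,b₁)·h₁·h₂` and `v = v₁·v₂·(a₁,b₁)` are single cycles on `A ∪ B`
and `[h,v]` is the conjugate of `[h₁,v₁]·[h₂,v₂]` by the transposition `(a₁,b₁)`. -/
theorem stmt_4 {α : Type*} [Fintype α] [DecidableEq α]
    (h₁ v₁ h₂ v₂ : Equiv.Perm α) (A B : Finset α) (a₁ a₂ b₁ b₂ : α)
    (hAB : Disjoint A B)
    (hh₁ : h₁.IsCycle) (hh₁s : h₁.support = A)
    (hv₁ : v₁.IsCycle) (hv₁s : v₁.support = A)
    (hh₂ : h₂.IsCycle) (hh₂s : h₂.support = B)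
    (hv₂ : v₂.IsCycle) (hv₂s : v₂.support = B)
    (ha₁ : a₁ ∈ A) (hb₁ : b₁ ∈ B)
    (ha12 : h₁ a₁ = a₂) (hb12 : h₂ b₁ = b₂)
    (hane : a₁ ≠ a₂) (hbne : b₁ ≠ b₂)
    (hv₁n : v₁⁻¹ a₁ = a₂) (hv₂n : v₂⁻¹ b₁ = b₂) :
    ∀ h v : Equiv.Perm α,
      h = Equiv.swap a₁ b₁ * h₁ * h₂ →
      v = v₁ * v₂ * Equiv.swap a₁ b₁ →
      h.IsCycle ∧ h.support = A ∪ B ∧ v.IsCycle ∧ v.support = A ∪ B ∧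
        h * v * h⁻¹ * v⁻¹ =
          Equiv.swap a₁ b₁ * ((h₁ * v₁ * h₁⁻¹ * v₁⁻¹) * (h₂ * v₂ * h₂⁻¹ * v₂⁻¹)) *
            (Equiv.swap a₁ b₁)⁻¹ :=
  stmt_4_general h₁ v₁ h₂ v₂ A B a₁ a₂ b₁ b₂ hAB hh₁ hh₁s hv₁ hv₁s hh₂ hh₂s hv₂ hv₂s ha₁ hb₁ ha12
    hb12 hv₁n hv₂n
end

section
/- Under the hypotheses of the cylinder concatenation lemma, if [h₁,v₁] has cycle type (k₁+1, ..., kₙ+1) and [h₂,v₂] has cycle type (l₁+1, ..., l_m+1), then [h,v] (with h = (a₁,b₁)h₁h₂ and v = v₁v₂(a₁,b₁)) has cycle type (k₁+1, ..., kₙ+1, l₁+1, ..., l_m+1). -/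
/-!
Write `s = (a₁,b₁)`, `H = h₁h₂` and `V = v₁v₂`. Since `h₁a₁ = a₂ = v₁⁻¹a₁` and `h₂b₁ = b₂ = v₂⁻¹b₁`,
and each of `h₁, v₁, h₂, v₂` is trivial off its own cylinder, `VH` fixes both `a₁` and `b₁`,
so it commutes with `s`; this turns `[sH, Vs]` into the conjugate `s[H,V]s⁻¹`. As the two cylinders are disjoint,
`[H,V] = [h₁,v₁][h₂,v₂]` is a product of disjoint permutations, whose cycle type is the sum.
-/

open Equiv Equiv.Perm
open scoped commutatorElement

theorem commutatorElement_mul_mul_of_commute_s5 {G : Type*} [Group G] {a b c d : G}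
    (hac : Commute a c) (had : Commute a d) (hbc : Commute b c) (hbd : Commute b d) :
    ⁅a * c, b * d⁆ = ⁅a, b⁆ * ⁅c, d⁆ := by
  have hcd : Commute (c * d * c⁻¹) a⁻¹ := ((hac.mul_right had).mul_right hac.inv_right).symm.inv_right
  have hcd' : Commute (c * d * c⁻¹ * d⁻¹) b⁻¹ :=
    (((hbc.mul_right hbd).mul_right hbc.inv_right).mul_right hbd.inv_right).symm.inv_right
  calc ⁅a * c, b * d⁆ = a * b * (c * d * c⁻¹ * a⁻¹) * d⁻¹ * b⁻¹ := by
        simp only [commutatorElement_def, mul_inv_rev, mul_assoc]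
        rw [← mul_assoc c b, hbc.symm.eq, mul_assoc]
    _ = a * b * a⁻¹ * (c * d * c⁻¹ * d⁻¹ * b⁻¹) := by rw [hcd.eq]; group
    _ = ⁅a, b⁆ * ⁅c, d⁆ := by rw [hcd'.eq]; simp only [commutatorElement_def, mul_assoc]

theorem commutatorElement_mul_mul_of_inv_eq_self {G : Type*} [Group G] {s x y : G}
    (hs : s⁻¹ = s) (h : Commute s (y * x)) : ⁅s * x, y * s⁆ = s * ⁅x, y⁆ * s⁻¹ := by
  have hss : s * s = 1 := by rw [← mul_inv_cancel s, hs]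
  have h' : s * (x⁻¹ * y⁻¹) = x⁻¹ * y⁻¹ * s := by simpa only [mul_inv_rev] using h.inv_right.eq
  calc ⁅s * x, y * s⁆ = s * x * y * (s * (x⁻¹ * y⁻¹)) := by
        simp only [commutatorElement_def, mul_inv_rev, hs, mul_assoc, ← mul_assoc s s, hss, one_mul]
    _ = s * ⁅x, y⁆ * s⁻¹ := by rw [h', hs]; simp only [commutatorElement_def, mul_assoc]

namespace Equiv.Perm

variable {α : Type*}

theorem commute_swap_of_apply_eq_s5 [DecidableEq α] {g : Perm α} {x y : α} (hx : g x = x)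
    (hy : g y = y) : Commute (swap x y) g := by
  have := swap_apply_apply g x y
  rw [hx, hy, eq_mul_inv_iff_mul_eq] at this
  exact this

theorem Disjoint.commutatorElement_left {σ τ ρ : Perm α} (hσ : σ.Disjoint ρ) (hτ : τ.Disjoint ρ) :
    (⁅σ, τ⁆ : Perm α).Disjoint ρ :=
  ((hσ.mul_left hτ).mul_left hσ.inv_left).mul_left hτ.inv_left

end Equiv.Perm

theorem stmt_5_general {α : Type*} [Fintype α] [DecidableEq α]
    (h₁ v₁ h₂ v₂ : Equiv.Perm α) (A B : Finset α) (a₁ a₂ b₁ b₂ : α)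
    {n m : ℕ} (k : Fin n → ℕ) (l : Fin m → ℕ)
    (hAB : Disjoint A B)
    (hh₁s : h₁.support = A)
    (hv₁s : v₁.support = A)
    (hh₂s : h₂.support = B)
    (hv₂s : v₂.support = B)
    (ha₁ : a₁ ∈ A) (hb₁ : b₁ ∈ B)
    (ha12 : h₁ a₁ = a₂) (hb12 : h₂ b₁ = b₂)
    (hv₁n : v₁⁻¹ a₁ = a₂) (hv₂n : v₂⁻¹ b₁ = b₂)
    (hc₁ : (h₁ * v₁ * h₁⁻¹ * v₁⁻¹).cycleType =
      Multiset.map (fun i => k i + 1) (Finset.univ : Finset (Fin n)).val)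
    (hc₂ : (h₂ * v₂ * h₂⁻¹ * v₂⁻¹).cycleType =
      Multiset.map (fun j => l j + 1) (Finset.univ : Finset (Fin m)).val) :
    ∀ h v : Equiv.Perm α,
      h = Equiv.swap a₁ b₁ * h₁ * h₂ →
      v = v₁ * v₂ * Equiv.swap a₁ b₁ →
      (h * v * h⁻¹ * v⁻¹).cycleType =
        Multiset.map (fun i => k i + 1) (Finset.univ : Finset (Fin n)).val +
          Multiset.map (fun j => l j + 1) (Finset.univ : Finset (Fin m)).val := by
  rintro h v rfl rfl
  have disj : ∀ σ τ : Perm α, σ.support = A → τ.support = B → σ.Disjoint τ := fun σ τ hσ hτ =>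
    disjoint_iff_disjoint_support.mpr (hσ ▸ hτ ▸ hAB)
  have fixA : ∀ σ : Perm α, σ.support = B → ∀ x ∈ A, σ x = x := fun σ hσ x hx =>
    notMem_support.mp (hσ ▸ Finset.disjoint_left.mp hAB hx)
  have fixB : ∀ σ : Perm α, σ.support = A → ∀ x ∈ B, σ x = x := fun σ hσ x hx =>
    notMem_support.mp (hσ ▸ Finset.disjoint_right.mp hAB hx)
  have ha₂ : a₂ ∈ A := ha12 ▸ hh₁s ▸ apply_mem_support.mpr (hh₁s ▸ ha₁)
  have hb₂ : b₂ ∈ B := hb12 ▸ hh₂s ▸ apply_mem_support.mpr (hh₂s ▸ hb₁)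
  have hswap : Commute (swap a₁ b₁) (v₁ * v₂ * (h₁ * h₂)) := by
    refine commute_swap_of_apply_eq_s5 ?_ ?_
    · rw [mul_apply, mul_apply, mul_apply, fixA h₂ hh₂s a₁ ha₁, ha12, fixA v₂ hv₂s a₂ ha₂]
      exact (inv_eq_iff_eq.mp hv₁n).symm
    · rw [mul_apply, mul_apply, mul_apply, hb12, fixB h₁ hh₁s b₂ hb₂, ← inv_eq_iff_eq.mp hv₂n,
        fixB v₁ hv₁s b₁ hb₁]
  have hdisj : (⁅h₁, v₁⁆ : Perm α).Disjoint ⁅h₂, v₂⁆ :=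
    Disjoint.commutatorElement_left
      ((disj _ _ hh₁s hh₂s).symm.commutatorElement_left (disj _ _ hh₁s hv₂s).symm).symm
      ((disj _ _ hv₁s hh₂s).symm.commutatorElement_left (disj _ _ hv₁s hv₂s).symm).symm
  rw [← commutatorElement_def, mul_assoc,
    commutatorElement_mul_mul_of_inv_eq_self (swap_inv _ _) hswap, cycleType_conj,
    commutatorElement_mul_mul_of_commute_s5 (disj _ _ hh₁s hh₂s).commute (disj _ _ hh₁s hv₂s).commute
      (disj _ _ hv₁s hh₂s).commute (disj _ _ hv₁s hv₂s).commute,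
    hdisj.cycleType_mul, commutatorElement_def, commutatorElement_def, hc₁, hc₂]

/-- Under the hypotheses of the cylinder concatenation lemma, if `[h₁,v₁]` has
cycle type `(k₁+1, …, kₙ+1)` and `[h₂,v₂]` has cycle type `(l₁+1, …, l_m+1)`,
then `[h,v]`, with `h = (a₁,b₁)h₁h₂` and `v = v₁v₂(a₁,b₁)`, has cycle type
`(k₁+1, …, kₙ+1, l₁+1, …, l_m+1)`. -/
theorem stmt_5 {α : Type*} [Fintype α] [DecidableEq α]
    (h₁ v₁ h₂ v₂ : Equiv.Perm α) (A B : Finset α) (a₁ a₂ b₁ b₂ : α)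
    {n m : ℕ} (k : Fin n → ℕ) (l : Fin m → ℕ)
    (hAB : Disjoint A B)
    (hh₁ : h₁.IsCycle) (hh₁s : h₁.support = A)
    (hv₁ : v₁.IsCycle) (hv₁s : v₁.support = A)
    (hh₂ : h₂.IsCycle) (hh₂s : h₂.support = B)
    (hv₂ : v₂.IsCycle) (hv₂s : v₂.support = B)
    (ha₁ : a₁ ∈ A) (hb₁ : b₁ ∈ B)
    (ha12 : h₁ a₁ = a₂) (hb12 : h₂ b₁ = b₂)
    (hane : a₁ ≠ a₂) (hbne : b₁ ≠ b₂)
    (hv₁n : v₁⁻¹ a₁ = a₂) (hv₂n : v₂⁻¹ b₁ = b₂)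
    (hc₁ : (h₁ * v₁ * h₁⁻¹ * v₁⁻¹).cycleType =
      Multiset.map (fun i => k i + 1) (Finset.univ : Finset (Fin n)).val)
    (hc₂ : (h₂ * v₂ * h₂⁻¹ * v₂⁻¹).cycleType =
      Multiset.map (fun j => l j + 1) (Finset.univ : Finset (Fin m)).val) :
    ∀ h v : Equiv.Perm α,
      h = Equiv.swap a₁ b₁ * h₁ * h₂ →
      v = v₁ * v₂ * Equiv.swap a₁ b₁ →
      (h * v * h⁻¹ * v⁻¹).cycleType =
        Multiset.map (fun i => k i + 1) (Finset.univ : Finset (Fin n)).val +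
          Multiset.map (fun j => l j + 1) (Finset.univ : Finset (Fin m)).val :=
  stmt_5_general h₁ v₁ h₂ v₂ A B a₁ a₂ b₁ b₂ k l hAB hh₁s hv₁s hh₂s hv₂s ha₁ hb₁ ha12 hb12 hv₁n hv₂n
    hc₁ hc₂
end

section
/- Let Ω : H → Z/2 be a quadratic form on a Z/2-vector space H with symplectic form ·, i.e. Ω(a+b) = Ω(a) + Ω(b) + a·b for all a,b. If Ω vanishes at 0 and positively spans under the quadratic relation, then for any two symplectic bases {aᵢ,bᵢ} and {a'ᵢ,b'ᵢ} of H, Σᵢ Ω(aᵢ)Ω(bᵢ) = Σᵢ Ω(a'ᵢ)Ω(b'ᵢ) in Z/2 (Arf's theorem: the Arf invariant is independent of the choice of symplectic basis). -/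
/-!
Count the sign `(-1)^Ω(x)` over all of `H`: this Gauss sum does not depend on any basis. In a
symplectic basis the hyperbolic planes `⟨aᵢ, bᵢ⟩` are mutually orthogonal, so `Ω` is additive
across them and the sum factors into `g` sums over `ℤ/2 × ℤ/2`, each equal to
`2 · (-1)^(Ω(aᵢ)Ω(bᵢ))`. Hence the Gauss sum is `2^g · (-1)^Arf`, which determines the Arf
invariant.
-/

open Finset Module Sum

lemma AddChar.map_sum_eq_prod {ι A M : Type*} [AddCommMonoid A] [CommMonoid M]
    (ψ : AddChar A M) (s : Finset ι) (t : ι → A) :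
    ψ (∑ i ∈ s, t i) = ∏ i ∈ s, ψ (t i) := by
  have h := map_prod ψ.toMonoidHom (fun i => Multiplicative.ofAdd (t i)) s
  simpa only [← ofAdd_sum, AddChar.toMonoidHom_apply, toAdd_ofAdd] using h

def signChar : AddChar (ZMod 2) ℤ where
  toFun z := if z = 0 then 1 else -1
  map_zero_eq_one' := rfl
  map_add_eq_mul' := by decide

lemma signChar_injective : Function.Injective signChar := by
  unfold Function.Injective; decide

lemma sum_signChar_mul_add_mul_add_mul (u v : ZMod 2) :
    ∑ p : ZMod 2 × ZMod 2, signChar (p.1 * u + p.2 * v + p.1 * p.2) = 2 * signChar (u * v) := by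
  revert u v; decide

section

variable {H : Type*} [AddCommGroup H] [Module (ZMod 2) H] {g : ℕ}

def IsQuadraticRefinement (B : H →ₗ[ZMod 2] H →ₗ[ZMod 2] ZMod 2) (Ω : H → ZMod 2) : Prop :=
  ∀ a b, Ω (a + b) = Ω a + Ω b + B a b

structure IsSymplecticBasis (B : H →ₗ[ZMod 2] H →ₗ[ZMod 2] ZMod 2)
    (e : Basis (Fin g ⊕ Fin g) (ZMod 2) H) : Prop where
  inl_inr : ∀ i j, B (e (inl i)) (e (inr j)) = if i = j then 1 else 0
  inl_inl : ∀ i j, B (e (inl i)) (e (inl j)) = 0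
  inr_inr : ∀ i j, B (e (inr i)) (e (inr j)) = 0

noncomputable def arfOfBasis (Ω : H → ZMod 2) (e : Basis (Fin g ⊕ Fin g) (ZMod 2) H) : ZMod 2 :=
  ∑ i, Ω (e (inl i)) * Ω (e (inr i))

namespace IsQuadraticRefinement

variable {B : H →ₗ[ZMod 2] H →ₗ[ZMod 2] ZMod 2} {Ω : H → ZMod 2}
  (hΩ : IsQuadraticRefinement B Ω)
include hΩ

lemma map_zero : Ω 0 = 0 := by
  simpa using hΩ 0 0

lemma map_smul (c : ZMod 2) (x : H) : Ω (c • x) = c * Ω x := by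
  obtain rfl | rfl : c = 0 ∨ c = 1 := by revert c; decide
  · simpa using hΩ.map_zero
  · simp

lemma apply_symm (x y : H) : B x y = B y x := by
  have h := (hΩ x y).symm.trans (add_comm x y ▸ hΩ y x)
  rwa [add_comm (Ω y), add_right_inj] at h

lemma map_sum_of_pairwise_orthogonal {ι : Type*} (s : Finset ι) (v : ι → H)
    (horth : (s : Set ι).Pairwise fun i j => B (v i) (v j) = 0) :
    Ω (∑ i ∈ s, v i) = ∑ i ∈ s, Ω (v i) := by
  classical
  induction s using Finset.induction_on with
  | empty => simpa using hΩ.map_zero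
  | insert a s ha ih =>
    have horth_a : ∀ j ∈ s, B (v a) (v j) = 0 := fun j hj =>
      horth (by simp) (by simp [hj]) (by rintro rfl; exact ha hj)
    rw [sum_insert ha, sum_insert ha, hΩ, ih (horth.mono (by simp)), map_sum,
      sum_eq_zero horth_a, add_zero]

lemma map_equivFun_symm {e : Basis (Fin g ⊕ Fin g) (ZMod 2) H} (he : IsSymplecticBasis B e)
    (c : Fin g ⊕ Fin g → ZMod 2) :
    Ω (e.equivFun.symm c) = ∑ i, (c (inl i) * Ω (e (inl i)) + c (inr i) * Ω (e (inr i))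
      + c (inl i) * c (inr i)) := by
  have hsplit : e.equivFun.symm c
      = ∑ i, (c (inl i) • e (inl i) + c (inr i) • e (inr i)) := by
    rw [Basis.equivFun_symm_apply, Fintype.sum_sum_type, ← sum_add_distrib]
  have horth : ((univ : Finset (Fin g)) : Set (Fin g)).Pairwise fun i j =>
      B (c (inl i) • e (inl i) + c (inr i) • e (inr i))
        (c (inl j) • e (inl j) + c (inr j) • e (inr j)) = 0 := by
    intro i _ j _ hij
    have hji : B (e (inr i)) (e (inl j)) = 0 := by
      rw [hΩ.apply_symm, he.inl_inr, if_neg (Ne.symm hij)]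
    simp [he.inl_inl, he.inr_inr, he.inl_inr, hji, hij]
  rw [hsplit, hΩ.map_sum_of_pairwise_orthogonal _ _ horth]
  refine sum_congr rfl fun i _ => ?_
  simp only [hΩ _ _, hΩ.map_smul, _root_.map_smul, LinearMap.smul_apply, he.inl_inr, ↓reduceIte,
    smul_eq_mul, mul_one, add_right_inj]
  ring

lemma sum_signChar_eq [Fintype H] {e : Basis (Fin g ⊕ Fin g) (ZMod 2) H}
    (he : IsSymplecticBasis B e) :
    ∑ x : H, signChar (Ω x) = 2 ^ g * signChar (arfOfBasis Ω e) := by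
  let pairs : (Fin g ⊕ Fin g → ZMod 2) ≃ (Fin g → ZMod 2 × ZMod 2) :=
    (Equiv.sumArrowEquivProdArrow _ _ _).trans (Equiv.arrowProdEquivProdArrow _ _ _).symm
  calc ∑ x : H, signChar (Ω x)
      = ∑ c : Fin g ⊕ Fin g → ZMod 2, signChar (Ω (e.equivFun.symm c)) :=
        (Fintype.sum_equiv e.equivFun.symm.toEquiv _ _ fun _ => rfl).symm
    _ = ∑ p : Fin g → ZMod 2 × ZMod 2, ∏ i, signChar ((p i).1 * Ω (e (inl i))
          + (p i).2 * Ω (e (inr i)) + (p i).1 * (p i).2) :=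
        Fintype.sum_equiv pairs _ _ fun c => by
          rw [hΩ.map_equivFun_symm he, AddChar.map_sum_eq_prod]; rfl
    _ = ∏ i, ∑ q : ZMod 2 × ZMod 2, signChar (q.1 * Ω (e (inl i))
          + q.2 * Ω (e (inr i)) + q.1 * q.2) :=
        (Fintype.prod_sum fun i (q : ZMod 2 × ZMod 2) =>
          signChar (q.1 * Ω (e (inl i)) + q.2 * Ω (e (inr i)) + q.1 * q.2)).symm
    _ = ∏ i, 2 * signChar (Ω (e (inl i)) * Ω (e (inr i))) := by
        simp only [sum_signChar_mul_add_mul_add_mul]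
    _ = 2 ^ g * signChar (arfOfBasis Ω e) := by
        rw [prod_mul_distrib, prod_const, card_univ, Fintype.card_fin, arfOfBasis,
          AddChar.map_sum_eq_prod]

end IsQuadraticRefinement

end

theorem stmt_13_general {H : Type*} [AddCommGroup H] [Module (ZMod 2) H] {g : ℕ}
    (B : H →ₗ[ZMod 2] H →ₗ[ZMod 2] ZMod 2)
    (Ω : H → ZMod 2)
    (hquad : ∀ a b : H, Ω (a + b) = Ω a + Ω b + B a b)
    (e f : Module.Basis (Fin g ⊕ Fin g) (ZMod 2) H)
    (heAB : ∀ i j, B (e (Sum.inl i)) (e (Sum.inr j)) = if i = j then 1 else 0)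
    (heAA : ∀ i j, B (e (Sum.inl i)) (e (Sum.inl j)) = 0)
    (heBB : ∀ i j, B (e (Sum.inr i)) (e (Sum.inr j)) = 0)
    (hfAB : ∀ i j, B (f (Sum.inl i)) (f (Sum.inr j)) = if i = j then 1 else 0)
    (hfAA : ∀ i j, B (f (Sum.inl i)) (f (Sum.inl j)) = 0)
    (hfBB : ∀ i j, B (f (Sum.inr i)) (f (Sum.inr j)) = 0) :
    ∑ i, Ω (e (Sum.inl i)) * Ω (e (Sum.inr i)) =
      ∑ i, Ω (f (Sum.inl i)) * Ω (f (Sum.inr i)) := by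
  let : Fintype H := Module.fintypeOfFintype e
  have hΩ : IsQuadraticRefinement B Ω := hquad
  have he := hΩ.sum_signChar_eq (e := e) ⟨heAB, heAA, heBB⟩
  have hf := hΩ.sum_signChar_eq (e := f) ⟨hfAB, hfAA, hfBB⟩
  exact signChar_injective (mul_left_cancel₀ (pow_ne_zero g two_ne_zero) (he.symm.trans hf))

/-- Arf's theorem: for a quadratic form `Ω` refining a symplectic form `B` on a
`ℤ/2`-vector space (`Ω(a+b) = Ω(a) + Ω(b) + B a b`, `Ω 0 = 0`), the Arf
invariant `Σᵢ Ω(aᵢ)Ω(bᵢ)` is the same for any two symplectic bases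
`{aᵢ, bᵢ}` and `{a'ᵢ, b'ᵢ}`. -/
theorem stmt_13 {H : Type*} [AddCommGroup H] [Module (ZMod 2) H] {g : ℕ}
    (B : H →ₗ[ZMod 2] H →ₗ[ZMod 2] ZMod 2)
    (Ω : H → ZMod 2) (hΩ0 : Ω 0 = 0)
    (hquad : ∀ a b : H, Ω (a + b) = Ω a + Ω b + B a b)
    (e f : Module.Basis (Fin g ⊕ Fin g) (ZMod 2) H)
    (heAB : ∀ i j, B (e (Sum.inl i)) (e (Sum.inr j)) = if i = j then 1 else 0)
    (heAA : ∀ i j, B (e (Sum.inl i)) (e (Sum.inl j)) = 0)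
    (heBB : ∀ i j, B (e (Sum.inr i)) (e (Sum.inr j)) = 0)
    (hfAB : ∀ i j, B (f (Sum.inl i)) (f (Sum.inr j)) = if i = j then 1 else 0)
    (hfAA : ∀ i j, B (f (Sum.inl i)) (f (Sum.inl j)) = 0)
    (hfBB : ∀ i j, B (f (Sum.inr i)) (f (Sum.inr j)) = 0) :
    ∑ i, Ω (e (Sum.inl i)) * Ω (e (Sum.inr i)) =
      ∑ i, Ω (f (Sum.inl i)) * Ω (f (Sum.inr i)) :=
  stmt_13_general B Ω hquad e f heAB heAA heBB hfAB hfAA hfBB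
end

section
/- The permutation representative with top row 0,...,10 and bottom row 2,10,7,5,8,1,9,6,4,3,0 gives, with h = (1,...,10) and v the inverse of the permutation obtained by deleting 0s, a single 10-cycle v and a commutator [h,v] that is a product of two disjoint 5-cycles (hence a 1,1-square-tiled surface in the stratum H(4,4)). -/
/-!
A permutation is determined by its values at all points but one, so the hypotheses pin down
`π = (1 2 10 3 7 9 4 5 8 6)` and `h = (1 2 … 10)`. A direct computation then gives
`h π⁻¹ h⁻¹ π = (1 7 6 3 9)(2 8 5 4 10)`, a product of two disjoint 5-cycles.
-/

open Equiv Equiv.Perm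

theorem Equiv.Perm.eq_of_forall_ne_apply_eq {α : Type*} {σ τ : Perm α} (a : α)
    (h : ∀ x, x ≠ a → σ x = τ x) : σ = τ := by
  ext x
  by_cases hx : x = a
  · subst hx
    by_contra hne
    -- `y := τ⁻¹ (σ x)` would be a second preimage of `σ x` under `σ`.
    have hy : τ.symm (σ x) ≠ x := fun hy =>
      hne ((τ.apply_symm_apply _).symm.trans (congrArg τ hy))
    exact hy (σ.injective ((h _ hy).trans (τ.apply_symm_apply _)))
  · exact h x hx

namespace List

variable {α : Type*} [DecidableEq α] [Fintype α] {l l' : List α}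

theorem card_support_formPerm (hl : Nodup l) (hn : 2 ≤ l.length) :
    (formPerm l).support.card = l.length := by
  rw [support_formPerm_of_nodup l hl, card_toFinset, dedup_eq_self.mpr hl]
  rintro x rfl
  simp at hn

theorem cycleType_formPerm_of_nodup (hl : Nodup l) (hn : 2 ≤ l.length) :
    (formPerm l).cycleType = {l.length} := by
  rw [(isCycle_formPerm hl hn).cycleType, card_support_formPerm hl hn]

theorem cycleType_formPerm_mul_formPerm (hl : Nodup l) (hl' : Nodup l')
    (hn : 2 ≤ l.length) (hn' : 2 ≤ l'.length) (hd : l.Disjoint l') :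
    (formPerm l * formPerm l').cycleType = {l.length, l'.length} := by
  rw [((formPerm_disjoint_iff hl hl' hn hn').mpr hd).cycleType_mul,
    cycleType_formPerm_of_nodup hl hn, cycleType_formPerm_of_nodup hl' hn']
  rfl

end List

set_option maxRecDepth 10000 in
theorem commutator_eq_formPerm_mul_formPerm :
    List.formPerm ([1, 2, 3, 4, 5, 6, 7, 8, 9, 10] : List (Fin 11)) *
      (List.formPerm [1, 2, 10, 3, 7, 9, 4, 5, 8, 6])⁻¹ *
      (List.formPerm [1, 2, 3, 4, 5, 6, 7, 8, 9, 10])⁻¹ *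
      List.formPerm [1, 2, 10, 3, 7, 9, 4, 5, 8, 6] =
      List.formPerm [1, 7, 6, 3, 9] * List.formPerm [2, 8, 5, 4, 10] := by
  decide

/-- The representative with top row `0,…,10` and bottom row
`2,10,7,5,8,1,9,6,4,3,0` gives a 1,1-square-tiled surface in `H(4,4)`: with
`h = (1,2,…,10)` and `v = π⁻¹` where `π` is the permutation obtained by deleting
the `0`s (`1↦2, 2↦10, 3↦7, 4↦5, 5↦8, 6↦1, 7↦9, 8↦6, 9↦4, 10↦3`), `π` is a
single 10-cycle and the commutator `[h,v]` is a product of two disjoint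
5-cycles. -/
theorem stmt_15 (π h : Equiv.Perm (Fin 11))
    (hπ1 : π 1 = 2) (hπ2 : π 2 = 10) (hπ3 : π 3 = 7) (hπ4 : π 4 = 5)
    (hπ5 : π 5 = 8) (hπ6 : π 6 = 1) (hπ7 : π 7 = 9) (hπ8 : π 8 = 6)
    (hπ9 : π 9 = 4) (hπ10 : π 10 = 3)
    (hh1 : h 1 = 2) (hh2 : h 2 = 3) (hh3 : h 3 = 4) (hh4 : h 4 = 5)
    (hh5 : h 5 = 6) (hh6 : h 6 = 7) (hh7 : h 7 = 8) (hh8 : h 8 = 9)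
    (hh9 : h 9 = 10) (hh10 : h 10 = 1) :
    π.IsCycle ∧ π.support.card = 10 ∧
      (h * π⁻¹ * h⁻¹ * π).cycleType = {5, 5} := by
  obtain rfl : π = List.formPerm [1, 2, 10, 3, 7, 9, 4, 5, 8, 6] :=
    Perm.eq_of_forall_ne_apply_eq 0 fun x hx => by fin_cases x <;> simp_all <;> decide
  obtain rfl : h = List.formPerm [1, 2, 3, 4, 5, 6, 7, 8, 9, 10] :=
    Perm.eq_of_forall_ne_apply_eq 0 fun x hx => by fin_cases x <;> simp_all <;> decide
  refine ⟨List.isCycle_formPerm (by decide) (by decide),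
    List.card_support_formPerm (by decide) (by decide), ?_⟩
  rw [commutator_eq_formPerm_mul_formPerm]
  exact List.cycleType_formPerm_mul_formPerm (by decide) (by decide) (by decide) (by decide)
    (by simp)
end
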